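/- arXiv:2203.08651 — 6 statements merged into one kernel-verified Lean document; each statement's English description precedes it below -/
import Mathlib

section
/- Let ρ: [0,∞) → ℝ satisfy −ρ ∈ 𝒫 and ∫₀¹ ds/(−ρ(s)) = ∞, and set F̃(q) := ∫₁^q ds/(−ρ(s)) for q > 0, a strictly increasing continuous bijection from (0,∞) onto (−∞, M̃) with M̃ := lim_{q→∞} F̃(q) ∈ (0,∞]. Let θ, δ > 0 and tᵢ < t_{i+1} be reals with t_{i+1} − tᵢ ≤ θ. Let w: [tᵢ, t_{i+1}) → (0,∞) be continuous with D⁺w(t) ≤ −ρ(w(t)) for all t ∈ [tᵢ, t_{i+1}). Define z(t) := F̃⁻¹( F̃(w(t)) − ((t − tᵢ)/(t_{i+1} − tᵢ))(θ + δ) ). Then D⁺z(t) ≤ −(δ/θ)·(−ρ)(z(t)) for all t ∈ [tᵢ, t_{i+1}); in particular z is strictly decreasing at rate given by the class-𝒫 function s ↦ (δ/θ)(−ρ(s)). -/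
open Filter Topology Set MeasureTheory

noncomputable section

/-- Class 𝒦: continuous, strictly increasing on `[0,∞)`, vanishing at `0`. -/
def ClassK (γ : ℝ → ℝ) : Prop :=
  ContinuousOn γ (Set.Ici 0) ∧ StrictMonoOn γ (Set.Ici 0) ∧ γ 0 = 0

/-- Class 𝒦∞: class 𝒦 and unbounded. -/
def ClassKInf (γ : ℝ → ℝ) : Prop :=
  ClassK γ ∧ Filter.Tendsto γ Filter.atTop Filter.atTop

/-- Class 𝒦ℒ. -/
def ClassKL (β : ℝ → ℝ → ℝ) : Prop :=
  (∀ s, 0 ≤ s → ClassK (fun r => β r s)) ∧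
  (∀ r, 0 ≤ r → AntitoneOn (fun s => β r s) (Set.Ici 0) ∧
    Filter.Tendsto (fun s => β r s) Filter.atTop (nhds 0))

/-- Class 𝒫: continuous, positive definite. -/
def ClassP (φ : ℝ → ℝ) : Prop :=
  ContinuousOn φ (Set.Ici 0) ∧ φ 0 = 0 ∧ ∀ r, 0 < r → 0 < φ r

/-- Upper right Dini derivative `D⁺v(t) = limsup_{s→0⁺} (v(t+s) − v(t))/s`, valued in `EReal`. -/
def DiniUpper (v : ℝ → ℝ) (t : ℝ) : EReal :=
  Filter.limsup (fun s => (((v (t + s) - v t) / s : ℝ) : EReal)) (nhdsWithin 0 (Set.Ioi 0))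

/-- Impulse time sequence with initial time `t₀ = τ 0`: strictly increasing and tending to `∞`;
the impulse times are `τ i` for `i ≥ 1`. -/
def IsImpulseSeq (t₀ : ℝ) (τ : ℕ → ℝ) : Prop :=
  τ 0 = t₀ ∧ StrictMono τ ∧ Filter.Tendsto τ Filter.atTop Filter.atTop

/-- The set `S = {tᵢ : i ≥ 1}` of impulse times. -/
def impulseSet (τ : ℕ → ℝ) : Set ℝ := {s | ∃ i : ℕ, 1 ≤ i ∧ τ i = s}

/-- Impulsive-regular function on `[t₀,∞)`: right-continuous everywhere, continuous (within
`[t₀,∞)`) at every non-impulse time, and left limits exist at every impulse time. -/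
def ImpulsiveRegular (t₀ : ℝ) (τ : ℕ → ℝ) (v : ℝ → ℝ) : Prop :=
  (∀ t, t₀ ≤ t → ContinuousWithinAt v (Set.Ici t) t) ∧
  (∀ t, t₀ ≤ t → t ∉ impulseSet τ → ContinuousWithinAt v (Set.Ici t₀) t) ∧
  (∀ i : ℕ, 1 ≤ i → ∃ L : ℝ, Filter.Tendsto v (nhdsWithin (τ i) (Set.Iio (τ i))) (nhds L))


/-!
`F̃` is a primitive of `1 / (-ρ)`, monotone on `(0, ∞)`, and the divergence of `∫₀¹ ds / (-ρ s)`
makes it unbounded below, so `F̃ ∘ z = F̃ ∘ w - k (t - tᵢ)` with `k = (θ + δ) / (t_{i+1} - tᵢ)`.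
Upper Dini derivatives pass through a monotone function that is differentiable at the relevant
point, in both directions: composing with `F̃` gives `D⁺(F̃ ∘ w) ≤ 1`, hence
`D⁺(F̃ ∘ z) ≤ 1 - k ≤ -δ / θ`, and undoing `F̃` multiplies by `F̃'(z)⁻¹ = -ρ(z)`.
-/

section DiniUpper

variable {v : ℝ → ℝ} {t c : ℝ}

theorem diniUpper_le_coe_iff :
    DiniUpper v t ≤ (c : EReal) ↔ ∀ ε > 0, ∀ᶠ s in 𝓝[>] 0, v (t + s) ≤ v t + (c + ε) * s := by
  constructor
  · intro h ε hε
    have hlt : DiniUpper v t < ((c + ε : ℝ) : EReal) :=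
      h.trans_lt (EReal.coe_lt_coe_iff.2 (by linarith))
    filter_upwards [eventually_lt_of_limsup_lt hlt, self_mem_nhdsWithin] with s hs (hs0 : 0 < s)
    have := (div_lt_iff₀ hs0).1 (EReal.coe_lt_coe_iff.1 hs)
    linarith
  · intro h
    refine EReal.le_of_forall_lt_iff_le.1 fun y hy => ?_
    have hε : 0 < y - c := sub_pos.2 (EReal.coe_lt_coe_iff.1 hy)
    refine limsup_le_of_le (by isBoundedDefault) ?_
    filter_upwards [h _ hε, self_mem_nhdsWithin] with s hs (hs0 : 0 < s)
    refine EReal.coe_le_coe_iff.2 ((div_le_iff₀ hs0).2 ?_)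
    linarith

theorem diniUpper_le_sub_of_eventually_eq {f g : ℝ → ℝ} {k : ℝ}
    (hfg : ∀ᶠ s in 𝓝[>] 0, f (t + s) - f t = g (t + s) - g t - k * s)
    (hg : DiniUpper g t ≤ (c : EReal)) : DiniUpper f t ≤ ((c - k : ℝ) : EReal) := by
  rw [diniUpper_le_coe_iff] at hg ⊢
  intro ε hε
  filter_upwards [hfg, hg ε hε] with s hfgs hgs
  linarith

end DiniUpper

section AlongLine

variable {g : ℝ → ℝ} {g' x b : ℝ}

theorem eventually_add_mul_mem {S : Set ℝ} (hS : S ∈ 𝓝 x) (h : ℝ) :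
    ∀ᶠ s in 𝓝[>] 0, x + h * s ∈ S :=
  (((continuous_const.add (continuous_const.mul continuous_id)).tendsto' 0 x
    (by simp)).eventually hS).filter_mono nhdsWithin_le_nhds

theorem HasDerivAt.tendsto_slope_along (hg : HasDerivAt g g' x) (h : ℝ) :
    Tendsto (fun s => (g (x + h * s) - g x) / s) (𝓝[>] 0) (𝓝 (g' * h)) := by
  have hline : HasDerivAt (fun s => g (x + h * s)) (g' * h) 0 := by
    have hg0 : HasDerivAt g g' (x + h * 0) := by simpa using hg
    simpa [Function.comp_def] using hg0.comp 0 (((hasDerivAt_id 0).const_mul h).const_add x)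
  simpa [div_eq_inv_mul] using hline.tendsto_slope_zero_right

theorem HasDerivAt.eventually_lt_add_mul (hg : HasDerivAt g g' x) {h : ℝ} (hb : g' * h < b) :
    ∀ᶠ s in 𝓝[>] 0, g (x + h * s) < g x + b * s := by
  filter_upwards [(hg.tendsto_slope_along h).eventually (eventually_lt_nhds hb),
    self_mem_nhdsWithin] with s hs (hs0 : 0 < s)
  have := (div_lt_iff₀ hs0).1 hs
  linarith

theorem HasDerivAt.eventually_add_mul_lt (hg : HasDerivAt g g' x) {h : ℝ} (hb : b < g' * h) :
    ∀ᶠ s in 𝓝[>] 0, g x + b * s < g (x + h * s) := by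
  filter_upwards [(hg.tendsto_slope_along h).eventually (eventually_gt_nhds hb),
    self_mem_nhdsWithin] with s hs (hs0 : 0 < s)
  have := (lt_div_iff₀ hs0).1 hs
  linarith

end AlongLine

theorem eventually_add_mem_Ico {a b t : ℝ} (ht : t ∈ Ico a b) :
    ∀ᶠ s in 𝓝[>] 0, t + s ∈ Ico a b := by
  filter_upwards [self_mem_nhdsWithin,
    (eventually_lt_nhds (sub_pos.2 ht.2)).filter_mono nhdsWithin_le_nhds] with s (hs0 : 0 < s) hs
  exact ⟨by linarith [ht.1], by linarith⟩

theorem one_add_div_le_add_div_of_le {θ δ L : ℝ} (hθ : 0 < θ) (hδ : 0 ≤ δ) (hL : 0 < L)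
    (hLθ : L ≤ θ) :
    1 + δ / θ ≤ (θ + δ) / L := by
  rw [le_div_iff₀ hL, add_mul, one_mul, div_mul_eq_mul_div]
  have : δ * L / θ ≤ δ := (div_le_iff₀ hθ).2 (by nlinarith)
  linarith

section DiniUpperComp

variable {v g : ℝ → ℝ} {S : Set ℝ} {t c g' : ℝ}

theorem diniUpper_comp_le (hmono : MonotoneOn g S) (hS : S ∈ 𝓝 (v t))
    (hvS : ∀ᶠ s in 𝓝[>] 0, v (t + s) ∈ S) (hg : HasDerivAt g g' (v t)) (hg' : 0 ≤ g')
    (hv : DiniUpper v t ≤ (c : EReal)) : DiniUpper (g ∘ v) t ≤ ((g' * c : ℝ) : EReal) := by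
  rw [diniUpper_le_coe_iff] at hv ⊢
  intro ε hε
  set η := ε / (g' + 1)
  have hη : 0 < η := by positivity
  have hηε : g' * (c + η) + η = g' * c + ε := by
    simp only [η]
    field_simp
    ring
  filter_upwards [hv η hη, hvS, eventually_add_mul_mem hS (c + η),
    hg.eventually_lt_add_mul (b := g' * (c + η) + η) (lt_add_of_pos_right _ hη)]
    with s hvs hvsS hlineS hgline
  calc (g ∘ v) (t + s) ≤ g (v t + (c + η) * s) := hmono hvsS hlineS hvs
    _ ≤ (g ∘ v) t + (g' * c + ε) * s := by rw [← hηε]; exact hgline.le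

theorem diniUpper_le_of_comp (hmono : MonotoneOn g S) (hS : S ∈ 𝓝 (v t))
    (hvS : ∀ᶠ s in 𝓝[>] 0, v (t + s) ∈ S) (hg : HasDerivAt g g' (v t)) (hg' : 0 < g')
    (hgv : DiniUpper (g ∘ v) t ≤ (c : EReal)) : DiniUpper v t ≤ ((c / g' : ℝ) : EReal) := by
  rw [diniUpper_le_coe_iff] at hgv ⊢
  intro ε hε
  have hη : 0 < g' * ε / 2 := by positivity
  have hslope : c + g' * ε / 2 < g' * (c / g' + ε) := by
    rw [mul_add, mul_div_cancel₀ _ hg'.ne']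
    linarith
  filter_upwards [hgv _ hη, hvS, eventually_add_mul_mem hS (c / g' + ε),
    hg.eventually_add_mul_lt hslope] with s hgvs hvsS hlineS hgline
  by_contra! hlt
  have := hmono hlineS hvsS hlt.le
  simp only [Function.comp_apply] at hgvs
  linarith

end DiniUpperComp

section Primitive

variable {ν : ℝ → ℝ}

theorem hasDerivAt_integral_one_of_continuousOn_Ioi (hν : ContinuousOn ν (Ioi 0)) {q : ℝ}
    (hq : 0 < q) : HasDerivAt (fun q => ∫ s in (1 : ℝ)..q, ν s) (ν q) q :=
  intervalIntegral.integral_hasDerivAt_right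
    ((hν.mono fun _ hx => (lt_min one_pos hq).trans_le hx.1).intervalIntegrable)
    (hν.stronglyMeasurableAtFilter isOpen_Ioi q hq) (hν.continuousAt (isOpen_Ioi.mem_nhds hq))

theorem continuousOn_integral_one (hν : ContinuousOn ν (Ioi 0)) :
    ContinuousOn (fun q => ∫ s in (1 : ℝ)..q, ν s) (Ioi 0) := fun _ hq =>
  (hasDerivAt_integral_one_of_continuousOn_Ioi hν hq).continuousAt.continuousWithinAt

theorem monotoneOn_integral_one (hν : ContinuousOn ν (Ioi 0))
    (hν0 : ∀ x, 0 < x → 0 ≤ ν x) : MonotoneOn (fun q => ∫ s in (1 : ℝ)..q, ν s) (Ioi 0) := by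
  refine monotoneOn_of_deriv_nonneg (convex_Ioi 0) (continuousOn_integral_one hν) ?_ ?_ <;>
    rw [interior_Ioi]
  · exact fun q hq => (hasDerivAt_integral_one_of_continuousOn_Ioi hν hq).differentiableAt
      |>.differentiableWithinAt
  · intro q hq
    rw [(hasDerivAt_integral_one_of_continuousOn_Ioi hν hq).deriv]
    exact hν0 q hq

theorem exists_integral_one_lt (hν : ContinuousOn ν (Ioi 0)) (hν0 : ∀ x, 0 < x → 0 ≤ ν x)
    (hdiv : ∫⁻ s in Ioc (0 : ℝ) 1, ENNReal.ofReal (ν s) = ⊤) (M : ℝ) :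
    ∃ a, 0 < a ∧ ∫ s in (1 : ℝ)..a, ν s < M := by
  by_contra! hM
  set a : ℕ → ℝ := fun n => 1 / ((n : ℝ) + 1)
  have ha0 (n : ℕ) : 0 < a n := by positivity
  have ha1 (n : ℕ) : a n ≤ 1 := div_le_one_of_le₀ (by simp) (by positivity)
  have hint (n : ℕ) : IntegrableOn ν (Ioc (a n) 1) :=
    ((hν.mono fun _ hx => (ha0 n).trans_le hx.1).integrableOn_Icc).mono_set Ioc_subset_Icc_self
  have hbound (n : ℕ) : ∫ s in Ioc (a n) 1, ‖ν s‖ ≤ -M := by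
    have hnorm : ∫ s in Ioc (a n) 1, ‖ν s‖ = ∫ s in Ioc (a n) 1, ν s :=
      setIntegral_congr_fun measurableSet_Ioc fun s hs =>
        Real.norm_of_nonneg (hν0 s ((ha0 n).trans hs.1))
    rw [hnorm, ← intervalIntegral.integral_of_le (ha1 n), intervalIntegral.integral_symm]
    linarith [hM (a n) (ha0 n)]
  have hν_int : IntegrableOn ν (Ioc 0 1) :=
    integrableOn_Ioc_of_intervalIntegral_norm_bounded_left hint
      tendsto_one_div_add_atTop_nhds_zero_nat (Eventually.of_forall hbound)
  exact (Integrable.lintegral_lt_top hν_int).ne hdiv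

theorem exists_integral_one_eq (hν : ContinuousOn ν (Ioi 0)) (hν0 : ∀ x, 0 < x → 0 ≤ ν x)
    (hdiv : ∫⁻ s in Ioc (0 : ℝ) 1, ENNReal.ofReal (ν s) = ⊤) {b u : ℝ} (hb : 0 < b)
    (hu : u ≤ ∫ s in (1 : ℝ)..b, ν s) : ∃ q, 0 < q ∧ ∫ s in (1 : ℝ)..q, ν s = u := by
  obtain ⟨a, ha, hau⟩ := exists_integral_one_lt hν hν0 hdiv u
  have hab : a ≤ b := by
    by_contra! hba
    exact (monotoneOn_integral_one hν hν0 hb ha hba.le).not_gt (hau.trans_le hu)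
  obtain ⟨q, hq, hqu⟩ := intermediate_value_Icc hab
    ((continuousOn_integral_one hν).mono fun _ hx => ha.trans_le hx.1) ⟨hau.le, hu⟩
  exact ⟨q, ha.trans_le hq.1, hqu⟩

theorem integral_one_leftInverse_apply (hν : ContinuousOn ν (Ioi 0))
    (hν0 : ∀ x, 0 < x → 0 ≤ ν x) (hdiv : ∫⁻ s in Ioc (0 : ℝ) 1, ENNReal.ofReal (ν s) = ⊤)
    {G : ℝ → ℝ} (hG : ∀ q, 0 < q → G (∫ s in (1 : ℝ)..q, ν s) = q) {b u : ℝ} (hb : 0 < b)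
    (hu : u ≤ ∫ s in (1 : ℝ)..b, ν s) : 0 < G u ∧ ∫ s in (1 : ℝ)..G u, ν s = u := by
  obtain ⟨q, hq, rfl⟩ := exists_integral_one_eq hν hν0 hdiv hb hu
  rw [hG q hq]
  exact ⟨hq, rfl⟩

end Primitive

theorem flowEstimateUnstableFlow_general
    (ρ : ℝ → ℝ) (hρ : ClassP (fun s => -ρ s))
    (hdiv : ∫⁻ s in Set.Ioc (0:ℝ) 1, ENNReal.ofReal ((-ρ s)⁻¹) = ⊤)
    (Ftil Finv : ℝ → ℝ)
    (hFtil : ∀ q, Ftil q = ∫ s in (1:ℝ)..q, (-ρ s)⁻¹)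
    (hFinv : ∀ q, 0 < q → Finv (Ftil q) = q)
    (θ δ : ℝ) (hθ : 0 < θ) (hδ : 0 < δ)
    (ti tip : ℝ) (hlt : ti < tip) (hθdwell : tip - ti ≤ θ)
    (w : ℝ → ℝ)
    (hwpos : ∀ t ∈ Set.Ico ti tip, 0 < w t)
    (hwdini : ∀ t ∈ Set.Ico ti tip, DiniUpper w t ≤ (((-ρ (w t)) : ℝ) : EReal))
    (z : ℝ → ℝ)
    (hz : ∀ t, z t = Finv (Ftil (w t) - ((t - ti) / (tip - ti)) * (θ + δ))) :
    (∀ t ∈ Set.Ico ti tip,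
      DiniUpper z t ≤ (((-(δ / θ * (-ρ (z t)))) : ℝ) : EReal)) ∧
    ClassP (fun s => δ / θ * (-ρ s)) := by
  obtain rfl : Ftil = fun q => ∫ s in (1 : ℝ)..q, (-ρ s)⁻¹ := funext hFtil
  set F : ℝ → ℝ := fun q => ∫ s in (1 : ℝ)..q, (-ρ s)⁻¹
  have hν : ContinuousOn (fun s => (-ρ s)⁻¹) (Ioi 0) :=
    (hρ.1.mono Ioi_subset_Ici_self).inv₀ fun s hs => (hρ.2.2 s hs).ne'
  have hν0 (s : ℝ) (hs : 0 < s) : 0 ≤ (-ρ s)⁻¹ := (inv_pos.2 (hρ.2.2 s hs)).le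
  have hF' {q : ℝ} (hq : 0 < q) : HasDerivAt F (-ρ q)⁻¹ q :=
    hasDerivAt_integral_one_of_continuousOn_Ioi hν hq
  have hmono : MonotoneOn F (Ioi 0) := monotoneOn_integral_one hν hν0
  have hL : 0 < tip - ti := sub_pos.2 hlt
  have hz_spec (t : ℝ) (ht : t ∈ Ico ti tip) :
      0 < z t ∧ F (z t) = F (w t) - (t - ti) / (tip - ti) * (θ + δ) := by
    rw [hz t]
    exact integral_one_leftInverse_apply hν hν0 hdiv hFinv (hwpos t ht) <| sub_le_self _ <|
      mul_nonneg (div_nonneg (sub_nonneg.2 ht.1) hL.le) (by positivity)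
  refine ⟨fun t ht => ?_, continuousOn_const.mul hρ.1, by simp [hρ.2.1],
    fun s hs => mul_pos (div_pos hδ hθ) (hρ.2.2 s hs)⟩
  have hnext := eventually_add_mem_Ico ht
  have hwt := hwpos t ht
  have hzt := (hz_spec t ht).1
  have hFw := diniUpper_comp_le hmono (Ioi_mem_nhds hwt) (hnext.mono fun s hs => hwpos _ hs)
    (hF' hwt) (hν0 _ hwt) (hwdini t ht)
  rw [inv_mul_cancel₀ (hρ.2.2 _ hwt).ne'] at hFw
  have hFz := diniUpper_le_sub_of_eventually_eq (f := F ∘ z) (k := (θ + δ) / (tip - ti))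
    (hnext.mono fun s hs => by
      simp only [Function.comp_apply, (hz_spec _ hs).2, (hz_spec t ht).2]
      field_simp
      ring) hFw
  have hz_dini := diniUpper_le_of_comp hmono (Ioi_mem_nhds hzt)
    (hnext.mono fun s hs => (hz_spec _ hs).1) (hF' hzt) (inv_pos.2 (hρ.2.2 _ hzt)) hFz
  refine hz_dini.trans (EReal.coe_le_coe_iff.2 ?_)
  rw [div_inv_eq_mul]
  nlinarith [hρ.2.2 _ hzt, one_add_div_le_add_div_of_le hθ hδ.le hL hθdwell]

/-- flow estimate for unstable flows and stable jumps: the rescaled value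
`z(t) = F̃⁻¹(F̃(w(t)) − ((t − tᵢ)/(t_{i+1} − tᵢ))(θ + δ))` of a value `w` growing at rate at
most `−ρ` (with `−ρ ∈ 𝒫`) satisfies `D⁺z ≤ −(δ/θ)(−ρ)(z)`, i.e. decays at the class-𝒫 rate
`s ↦ (δ/θ)(−ρ(s))`. -/
theorem flowEstimateUnstableFlow
    (ρ : ℝ → ℝ) (hρ : ClassP (fun s => -ρ s))
    (hdiv : ∫⁻ s in Set.Ioc (0:ℝ) 1, ENNReal.ofReal ((-ρ s)⁻¹) = ⊤)
    (Ftil Finv : ℝ → ℝ)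
    (hFtil : ∀ q, Ftil q = ∫ s in (1:ℝ)..q, (-ρ s)⁻¹)
    (hFinv : ∀ q, 0 < q → Finv (Ftil q) = q)
    (θ δ : ℝ) (hθ : 0 < θ) (hδ : 0 < δ)
    (ti tip : ℝ) (hlt : ti < tip) (hθdwell : tip - ti ≤ θ)
    (w : ℝ → ℝ)
    (hwpos : ∀ t ∈ Set.Ico ti tip, 0 < w t)
    (hwcont : ContinuousOn w (Set.Ico ti tip))
    (hwdini : ∀ t ∈ Set.Ico ti tip, DiniUpper w t ≤ (((-ρ (w t)) : ℝ) : EReal))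
    (z : ℝ → ℝ)
    (hz : ∀ t, z t = Finv (Ftil (w t) - ((t - ti) / (tip - ti)) * (θ + δ))) :
    (∀ t ∈ Set.Ico ti tip,
      DiniUpper z t ≤ (((-(δ / θ * (-ρ (z t)))) : ℝ) : EReal)) ∧
    ClassP (fun s => δ / θ * (-ρ s)) :=
  flowEstimateUnstableFlow_general ρ hρ hdiv Ftil Finv hFtil hFinv θ δ hθ hδ ti tip hlt hθdwell w
    hwpos hwdini z hz
end
end

section
/- Let t₀ ∈ ℝ and (tᵢ)_{i≥1} be an impulse time sequence. Let M > 0, λ ∈ ℝ, L ≥ 0 and let (L_j)_{j≥1} be positive reals. Let u: [t₀,∞) → [0,∞) be impulsive-regular (in particular continuous on each interval [tᵢ, t_{i+1})) and suppose that for every i ≥ 0 and every t ∈ [tᵢ, t_{i+1}): u(t) ≤ M e^{λ(t − tᵢ)} u(tᵢ) + ∫_{tᵢ}^t M e^{λ(t − s)} L u(s) ds, and that u(t_{i+1}) ≤ L_{i+1} u(t_{i+1}⁻) for every i ≥ 0. Then for every n ≥ 0 and every t ∈ [t_n, t_{n+1}): u(t) ≤ M ( ∏_{j=1}^{n} L_j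 M ) u(t₀) e^{(M L + λ)(t − t₀)}, where the empty product equals 1. -/
open Filter Topology Set MeasureTheory

noncomputable section

/-!
On `[tᵢ, tᵢ₊₁)` the weighted function `e^{-λ(t - tᵢ)} u(t)` satisfies the integral Gronwall
inequality with rate `M L`, so `u(t) ≤ M u(tᵢ) e^{(ML + λ)(t - tᵢ)}` there. Passing to the left
limit at `tᵢ₊₁` and applying the jump bound gives
`u(tᵢ₊₁) ≤ Lᵢ₊₁ M u(tᵢ) e^{(ML + λ)(tᵢ₊₁ - tᵢ)}`, and iterating over the impulses produces
the product.
-/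

open Real

theorem le_mul_exp_of_le_add_integral {a b A C : ℝ} {v : ℝ → ℝ}
    (hv : ContinuousOn v (Icc a b)) (hC : 0 ≤ C)
    (hle : ∀ t ∈ Icc a b, v t ≤ A + ∫ s in a..t, C * v s) :
    ∀ t ∈ Icc a b, v t ≤ A * exp (C * (t - a)) := by
  intro t ht
  set W : ℝ → ℝ := fun t => A + ∫ s in a..t, C * v s
  have hCv : ContinuousOn (fun s => C * v s) (Icc a b) := continuousOn_const.mul hv
  have hW : ContinuousOn W (Icc a b) := by
    have := intervalIntegral.continuousOn_primitive_interval' (μ := volume)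
      (hCv.intervalIntegrable_of_Icc (ht.1.trans ht.2)) left_mem_uIcc
    exact continuousOn_const.add (this.mono Icc_subset_uIcc)
  have hW' : ∀ x ∈ Ico a b, HasDerivWithinAt W (C * v x) (Ici x) x := by
    intro x hx
    have hIcc : Icc a b ∈ 𝓝[>] x :=
      mem_nhdsWithin.2 ⟨Iio b, isOpen_Iio, hx.2, fun y hy => ⟨hx.1.trans hy.2.le, hy.1.le⟩⟩
    exact (intervalIntegral.integral_hasDerivWithinAt_right (t := Ioi x)
      ((hCv.mono (Icc_subset_Icc_right hx.2.le)).intervalIntegrable_of_Icc hx.1)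
      ⟨Icc a b, hIcc, hCv.aestronglyMeasurable measurableSet_Icc⟩
      ((hCv x (Ico_subset_Icc_self hx)).mono_of_mem_nhdsWithin hIcc)).const_add A
  calc v t ≤ W t := hle t ht
    _ ≤ gronwallBound A C 0 (t - a) :=
      le_gronwallBound_of_liminf_deriv_right_le hW
        (fun x hx _ hr => (hW' x hx).liminf_right_slope_le hr) (by simp [W])
        (fun x hx => by
          rw [add_zero]; exact mul_le_mul_of_nonneg_left (hle x (Ico_subset_Icc_self hx)) hC) t ht
    _ = A * exp (C * (t - a)) := gronwallBound_ε0 _ _ _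

theorem le_mul_exp_of_le_exp_add_integral {a b M lam L : ℝ} {u : ℝ → ℝ}
    (hu : ContinuousOn u (Ico a b)) (hML : 0 ≤ M * L)
    (hle : ∀ t ∈ Ico a b, u t ≤ M * exp (lam * (t - a)) * u a +
      ∫ s in a..t, M * exp (lam * (t - s)) * L * u s) :
    ∀ t ∈ Ico a b, u t ≤ M * u a * exp ((M * L + lam) * (t - a)) := by
  intro t ht
  set v : ℝ → ℝ := fun s => exp (-lam * (s - a)) * u s
  have hv : ContinuousOn v (Icc a t) :=
    (continuous_exp.comp (by fun_prop)).continuousOn.mul (hu.mono (Icc_subset_Ico_right ht.2))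
  have hv_le : ∀ s ∈ Icc a t, v s ≤ M * u a + ∫ r in a..s, M * L * v r := by
    intro s hs
    have hs' : s ∈ Ico a b := ⟨hs.1, hs.2.trans_lt ht.2⟩
    calc v s ≤ exp (-lam * (s - a)) * (M * exp (lam * (s - a)) * u a +
          ∫ r in a..s, M * exp (lam * (s - r)) * L * u r) :=
          mul_le_mul_of_nonneg_left (hle s hs') (exp_nonneg _)
      _ = M * u a + ∫ r in a..s, M * L * v r := by
          rw [mul_add, ← intervalIntegral.integral_const_mul]
          congr 1
          · rw [show exp (-lam * (s - a)) * (M * exp (lam * (s - a)) * u a) =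
              M * u a * (exp (-lam * (s - a)) * exp (lam * (s - a))) by ring, ← exp_add]
            simp
          · refine intervalIntegral.integral_congr fun r _ => ?_
            simp only [v]
            rw [show exp (-lam * (s - a)) * (M * exp (lam * (s - r)) * L * u r) =
              M * L * (exp (-lam * (s - a)) * exp (lam * (s - r))) * u r by ring, ← exp_add]
            ring_nf
  have hvt := le_mul_exp_of_le_add_integral hv hML hv_le t ⟨ht.1, le_rfl⟩
  calc u t = exp (lam * (t - a)) * v t := by
        simp only [v]; rw [← mul_assoc, ← exp_add]; ring_nf; simp
    _ ≤ exp (lam * (t - a)) * (M * u a * exp (M * L * (t - a))) :=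
        mul_le_mul_of_nonneg_left hvt (exp_nonneg _)
    _ = M * u a * exp ((M * L + lam) * (t - a)) := by
        rw [mul_left_comm, ← exp_add]; ring_nf

theorem Function.leftLim_le_of_tendsto {u g : ℝ → ℝ} {b c : ℝ}
    (hu : Tendsto u (𝓝[<] b) (𝓝 c)) (hg : ContinuousWithinAt g (Iio b) b)
    (hle : ∀ᶠ t in 𝓝[<] b, u t ≤ g t) : Function.leftLim u b ≤ g b := by
  rw [leftLim_eq_of_tendsto hu]
  exact le_of_tendsto_of_tendsto hu hg hle

theorem StrictMono.notMem_impulseSet {τ : ℕ → ℝ} (hτ : StrictMono τ) {i : ℕ} {s : ℝ}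
    (hs : s ∈ Ioo (τ i) (τ (i + 1))) : s ∉ impulseSet τ := by
  rintro ⟨j, -, rfl⟩
  have := hτ.lt_iff_lt.1 hs.1
  have := hτ.lt_iff_lt.1 hs.2
  omega

theorem ImpulsiveRegular.continuousOn_Ico {t₀ : ℝ} {τ : ℕ → ℝ} {v : ℝ → ℝ}
    (hv : ImpulsiveRegular t₀ τ v) (hτ : IsImpulseSeq t₀ τ) (i : ℕ) :
    ContinuousOn v (Ico (τ i) (τ (i + 1))) := by
  obtain ⟨hτ0, hτmono, -⟩ := hτ
  have ht₀ : t₀ ≤ τ i := hτ0 ▸ hτmono.monotone i.zero_le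
  intro s hs
  rcases hs.1.eq_or_lt with rfl | hlt
  · exact (hv.1 _ ht₀).mono Ico_subset_Ici_self
  · exact (hv.2.1 s (ht₀.trans hs.1) (hτmono.notMem_impulseSet ⟨hlt, hs.2⟩)).mono
      (Ico_subset_Ici_self.trans (Ici_subset_Ici.2 ht₀))

theorem le_prod_mul_exp_of_le_mul_exp_succ {x c τ : ℕ → ℝ} {K : ℝ} (hc : ∀ n, 0 ≤ c (n + 1))
    (hx : ∀ n, x (n + 1) ≤ c (n + 1) * x n * exp (K * (τ (n + 1) - τ n))) (n : ℕ) :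
    x n ≤ (∏ j ∈ Finset.Icc 1 n, c j) * x 0 * exp (K * (τ n - τ 0)) := by
  induction n with
  | zero => simp
  | succ n ih =>
    calc x (n + 1) ≤ c (n + 1) * x n * exp (K * (τ (n + 1) - τ n)) := hx n
      _ ≤ c (n + 1) * ((∏ j ∈ Finset.Icc 1 n, c j) * x 0 * exp (K * (τ n - τ 0))) *
          exp (K * (τ (n + 1) - τ n)) := by gcongr; exact hc n
      _ = (∏ j ∈ Finset.Icc 1 (n + 1), c j) * x 0 * exp (K * (τ (n + 1) - τ 0)) := by
          rw [Finset.prod_Icc_succ_top (by omega), mul_comm _ (c (n + 1)),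
            show K * (τ (n + 1) - τ 0) = K * (τ n - τ 0) + K * (τ (n + 1) - τ n) by ring, exp_add]
          ring

theorem impulsiveGronwall_general
    (t₀ : ℝ) (τ : ℕ → ℝ) (hτ : IsImpulseSeq t₀ τ)
    (M : ℝ) (hM : 0 < M) (lam : ℝ) (L : ℝ) (hL : 0 ≤ L)
    (Lj : ℕ → ℝ) (hLj : ∀ j : ℕ, 1 ≤ j → 0 < Lj j)
    (u : ℝ → ℝ)
    (hreg : ImpulsiveRegular t₀ τ u)
    (hflow : ∀ i : ℕ, ∀ t, τ i ≤ t → t < τ (i + 1) →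
      u t ≤ M * Real.exp (lam * (t - τ i)) * u (τ i) +
        ∫ s in (τ i)..t, M * Real.exp (lam * (t - s)) * L * u s)
    (hjump : ∀ i : ℕ, u (τ (i + 1)) ≤ Lj (i + 1) * Function.leftLim u (τ (i + 1))) :
    ∀ n : ℕ, ∀ t, τ n ≤ t → t < τ (n + 1) →
      u t ≤ M * (∏ j ∈ Finset.Icc 1 n, Lj j * M) * u t₀ *
        Real.exp ((M * L + lam) * (t - t₀)) := by
  set K := M * L + lam
  have hbetween (i : ℕ) : ∀ t ∈ Ico (τ i) (τ (i + 1)), u t ≤ M * u (τ i) * exp (K * (t - τ i)) :=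
    le_mul_exp_of_le_exp_add_integral (hreg.continuousOn_Ico hτ i) (mul_nonneg hM.le hL)
      fun t ht => hflow i t ht.1 ht.2
  have hstep (i : ℕ) :
      u (τ (i + 1)) ≤ Lj (i + 1) * M * u (τ i) * exp (K * (τ (i + 1) - τ i)) := by
    obtain ⟨c, hc⟩ := hreg.2.2 (i + 1) (by omega)
    have hleft : Function.leftLim u (τ (i + 1)) ≤ M * u (τ i) * exp (K * (τ (i + 1) - τ i)) :=
      Function.leftLim_le_of_tendsto (g := fun s => M * u (τ i) * exp (K * (s - τ i))) hc
        (by fun_prop) <| by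
        filter_upwards [Ioo_mem_nhdsLT (hτ.2.1 i.lt_succ_self)] with s hs
        exact hbetween i s ⟨hs.1.le, hs.2⟩
    calc u (τ (i + 1)) ≤ Lj (i + 1) * Function.leftLim u (τ (i + 1)) := hjump i
      _ ≤ Lj (i + 1) * (M * u (τ i) * exp (K * (τ (i + 1) - τ i))) := by
          gcongr; exact (hLj _ (by omega)).le
      _ = _ := by ring
  have himpulse := le_prod_mul_exp_of_le_mul_exp_succ (x := fun n => u (τ n))
    (c := fun j => Lj j * M) (fun n => mul_nonneg (hLj _ (by omega)).le hM.le) hstep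
  intro n t hnt htn
  calc u t ≤ M * u (τ n) * exp (K * (t - τ n)) := hbetween n t ⟨hnt, htn⟩
    _ ≤ M * ((∏ j ∈ Finset.Icc 1 n, Lj j * M) * u (τ 0) * exp (K * (τ n - τ 0))) *
        exp (K * (t - τ n)) := by gcongr; exact himpulse n
    _ = M * (∏ j ∈ Finset.Icc 1 n, Lj j * M) * u t₀ * exp (K * (t - t₀)) := by
        rw [hτ.1, show K * (t - t₀) = K * (τ n - t₀) + K * (t - τ n) by ring, exp_add]
        ring

/-- Gronwall-type estimate with impulses: a nonnegative impulsive-regular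
function satisfying a semigroup-type integral inequality on each interval between impulses
and multiplicative jump bounds satisfies the product-exponential estimate. -/
theorem impulsiveGronwall
    (t₀ : ℝ) (τ : ℕ → ℝ) (hτ : IsImpulseSeq t₀ τ)
    (M : ℝ) (hM : 0 < M) (lam : ℝ) (L : ℝ) (hL : 0 ≤ L)
    (Lj : ℕ → ℝ) (hLj : ∀ j : ℕ, 1 ≤ j → 0 < Lj j)
    (u : ℝ → ℝ) (hunn : ∀ t, t₀ ≤ t → 0 ≤ u t)
    (hreg : ImpulsiveRegular t₀ τ u)
    (hflow : ∀ i : ℕ, ∀ t, τ i ≤ t → t < τ (i + 1) →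
      u t ≤ M * Real.exp (lam * (t - τ i)) * u (τ i) +
        ∫ s in (τ i)..t, M * Real.exp (lam * (t - s)) * L * u s)
    (hjump : ∀ i : ℕ, u (τ (i + 1)) ≤ Lj (i + 1) * Function.leftLim u (τ (i + 1))) :
    ∀ n : ℕ, ∀ t, τ n ≤ t → t < τ (n + 1) →
      u t ≤ M * (∏ j ∈ Finset.Icc 1 n, Lj j * M) * u t₀ *
        Real.exp ((M * L + lam) * (t - t₀)) :=
  impulsiveGronwall_general t₀ τ hτ M hM lam L hL Lj hLj u hreg hflow hjump
end
end

section
/- Let β ∈ 𝒦ℒ. For every C > 0 and every ε > 0 there exists T = T(β, C, ε) ≥ 0, depending only on β, C and ε, such that the following holds: for every real normed space X, every t₀ ∈ ℝ and every function x: [t₀,∞) → X satisfying ‖x(t₀)‖ ≤ C and ‖x(t)‖ ≤ β(‖x(t∗)‖, t − t∗) + (1/2)‖x(t∗)‖ for all t₀ ≤ t∗ ≤ t, one has ‖x(t)‖ ≤ ε for all t ≥ t₀ + T. -/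
open Filter Topology Set MeasureTheory

noncomputable section

universe u

/-- uniform global attractivity from an iterated 𝒦ℒ bound: for every `C, ε > 0`
there is `T = T(β, C, ε)` such that every trajectory with `‖x(t₀)‖ ≤ C` satisfying
`‖x(t)‖ ≤ β(‖x(t∗)‖, t − t∗) + (1/2)‖x(t∗)‖` for all `t₀ ≤ t∗ ≤ t` obeys `‖x(t)‖ ≤ ε` for
all `t ≥ t₀ + T`. -/
theorem uniformAttractivity
    (β : ℝ → ℝ → ℝ) (hβ : ClassKL β) :
    ∀ C, 0 < C → ∀ ε, 0 < ε → ∃ T, 0 ≤ T ∧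
      ∀ (X : Type u) [NormedAddCommGroup X] [NormedSpace ℝ X],
      ∀ (t₀ : ℝ) (x : ℝ → X), ‖x t₀‖ ≤ C →
      (∀ tstar t, t₀ ≤ tstar → tstar ≤ t →
        ‖x t‖ ≤ β ‖x tstar‖ (t - tstar) + 1 / 2 * ‖x tstar‖) →
      ∀ t, t₀ + T ≤ t → ‖x t‖ ≤ ε := by
  intro C hC ε hε
  obtain ⟨hK, hL⟩ := hβ
  -- for every r > 0 there is τ ≥ 0 with β r τ ≤ r/4
  have hτ : ∀ r : ℝ, 0 < r → ∃ τ, 0 ≤ τ ∧ β r τ ≤ r / 4 := by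
    intro r hr
    have h2 := (hL r hr.le).2
    have hev : ∀ᶠ s in Filter.atTop, β r s < r / 4 :=
      h2 (Iio_mem_nhds (by linarith : (0:ℝ) < r / 4))
    obtain ⟨s, hs1, hs2⟩ := (hev.and (Filter.eventually_ge_atTop 0)).exists
    exact ⟨s, hs2, hs1.le⟩
  choose τf hτ0 hτle using fun k : ℕ => hτ ((3/4:ℝ)^k * C) (by positivity)
  set Tseq : ℕ → ℝ := fun k => ∑ i ∈ Finset.range k, τf i with hTseq
  have hTnonneg : ∀ k, 0 ≤ Tseq k := fun k =>
    Finset.sum_nonneg fun i _ => hτ0 i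
  have hTsucc : ∀ k, Tseq (k + 1) = Tseq k + τf k := fun k =>
    Finset.sum_range_succ _ _
  -- pick n with (3/4)^(n+1) * C ≤ ε
  have htend : Filter.Tendsto (fun n : ℕ => (3/4:ℝ)^n * C) Filter.atTop (nhds 0) := by
    simpa using (tendsto_pow_atTop_nhds_zero_of_lt_one (by norm_num) (by norm_num)).mul_const C
  obtain ⟨n, hn⟩ : ∃ n : ℕ, (3/4:ℝ)^(n+1) * C ≤ ε := by
    have hev : ∀ᶠ m in Filter.atTop, (3/4:ℝ)^m * C < ε :=
      Filter.Tendsto.eventually_lt_const hε htend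
    obtain ⟨m, hm⟩ := hev.exists
    exact ⟨m, by
      have h1 : (3/4:ℝ)^(m+1) ≤ (3/4:ℝ)^m :=
        pow_le_pow_of_le_one (by norm_num) (by norm_num) (Nat.le_succ m)
      have := mul_le_mul_of_nonneg_right h1 hC.le
      exact this.trans (le_of_lt hm)⟩
  refine ⟨Tseq (n + 1), hTnonneg _, ?_⟩
  intro X _ _ t₀ x hx0 hbound
  -- step lemma
  have step : ∀ (k : ℕ) (s : ℝ), t₀ ≤ s → ‖x s‖ ≤ (3/4:ℝ)^k * C →
      ∀ t, s + τf k ≤ t → ‖x t‖ ≤ (3/4:ℝ)^(k+1) * C := by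
    intro k s hs hxs t ht
    set r := (3/4:ℝ)^k * C with hr
    have hrpos : 0 < r := by positivity
    have hst : s ≤ t := le_trans (by linarith [hτ0 k]) ht
    have hb := hbound s t hs hst
    have hmono1 : β ‖x s‖ (t - s) ≤ β r (t - s) :=
      ((hK (t - s) (by linarith)).2.1).monotoneOn (norm_nonneg _)
        (le_of_lt hrpos) hxs
    have hmono2 : β r (t - s) ≤ β r (τf k) :=
      ((hL r hrpos.le).1) (Set.mem_Ici.2 (hτ0 k)) (Set.mem_Ici.2 (by linarith [hτ0 k]))
        (by linarith)
    have hcalc : ‖x t‖ ≤ r / 4 + 1 / 2 * r := by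
      calc ‖x t‖ ≤ β ‖x s‖ (t - s) + 1 / 2 * ‖x s‖ := hb
        _ ≤ β r (τf k) + 1 / 2 * r := by
            have := hτle k
            nlinarith [norm_nonneg (x s)]
        _ ≤ r / 4 + 1 / 2 * r := by linarith [hτle k]
    have : (3/4:ℝ)^(k+1) * C = 3/4 * r := by rw [hr, pow_succ]; ring
    linarith [hcalc, this.ge]
  have A : ∀ k, ∀ t, t₀ + Tseq (k+1) ≤ t → ‖x t‖ ≤ (3/4:ℝ)^(k+1) * C := by
    intro k
    induction k with
    | zero =>
      intro t ht
      refine step 0 t₀ le_rfl (by simpa using hx0) t ?_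
      have : Tseq 1 = τf 0 := by simp [hTseq]
      linarith [this ▸ ht]
    | succ m ih =>
      intro t ht
      have hs : ‖x (t₀ + Tseq (m+1))‖ ≤ (3/4:ℝ)^(m+1) * C := ih _ le_rfl
      refine step (m+1) (t₀ + Tseq (m+1)) (by linarith [hTnonneg (m+1)]) hs t ?_
      have := hTsucc (m+1)
      linarith
  intro t ht
  exact (A n t ht).trans hn
end
end

section
/- Let X and U be real normed spaces and let g: X × U → X satisfy g(0,0) = 0 and: for all C, D > 0 there exist constants L¹(C,D), L²(C,D) > 0 with ‖g(x,u) − g(y,u)‖ ≤ L¹(C,D)‖x − y‖ for all x, y with ‖x‖, ‖y‖ ≤ C and all u with ‖u‖ ≤ D, and ‖g(x,u) − g(x,v)‖ ≤ L²(C,D)‖u − v‖ for all x with ‖x‖ ≤ C and all u, v with ‖u‖, ‖v‖ ≤ D. Let κ ∈ 𝒦∞. Then there exists α̃ of class 𝒦 such that ‖g(x,u)‖ ≤ α̃(‖u‖) for all (x,u) ∈ X × U with ‖x‖ ≤ κ(‖u‖). -/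
/-!
The triangle inequality through `g 0 u` and the two Lipschitz estimates give
`‖g x u‖ ≤ K s * (‖x‖ + ‖u‖)` whenever `‖x‖, ‖u‖ ≤ s`, with `K` nondecreasing once we take running
maxima of the Lipschitz constants over integer radii. Its average `K̃ s` over `[s, s + 1]` is
continuous, still nondecreasing and still a bound, so with `s = κ ‖u‖ + ‖u‖` the function
`r ↦ K̃ (κ r + r) * (κ r + r)` is the required class-𝒦 bound.
-/

open Filter Topology Set MeasureTheory

noncomputable section

theorem Monotone.exists_continuous_monotone_ge {φ : ℝ → ℝ} (hφ : Monotone φ) :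
    ∃ ψ : ℝ → ℝ, Continuous ψ ∧ Monotone ψ ∧ φ ≤ ψ := by
  have hint : ∀ a b, IntervalIntegrable φ volume a b := fun _ _ => hφ.intervalIntegrable
  have hshift : ∀ r, ∫ t in r..r + 1, φ t = ∫ t in (0 : ℝ)..1, φ (t + r) := fun r => by
    rw [intervalIntegral.integral_comp_add_right, zero_add, add_comm]
  refine ⟨fun r => ∫ t in r..r + 1, φ t, ?_, fun r s hrs => ?_, fun r => ?_⟩
  · have hprim := intervalIntegral.continuous_primitive hint 0
    refine ((hprim.comp (continuous_add_const 1)).sub hprim).congr fun r => ?_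
    exact intervalIntegral.integral_interval_sub_left (hint 0 (r + 1)) (hint 0 r)
  · simp only [hshift]
    exact intervalIntegral.integral_mono_on zero_le_one
      (hφ.comp (monotone_id.add_const r)).intervalIntegrable
      (hφ.comp (monotone_id.add_const s)).intervalIntegrable fun t _ => hφ (by linarith)
  · calc φ r = ∫ _ in r..r + 1, φ r := by simp
      _ ≤ ∫ t in r..r + 1, φ t :=
        intervalIntegral.integral_mono_on (by linarith) intervalIntegrable_const (hint _ _)
          fun t ht => hφ ht.1

def SeparatelyLipschitzOnBounded {X U Y : Type*} [SeminormedAddCommGroup X]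
    [SeminormedAddCommGroup U] [SeminormedAddCommGroup Y] (g : X → U → Y) : Prop :=
  ∀ C, 0 < C → ∀ D, 0 < D → ∃ L1, 0 < L1 ∧ ∃ L2, 0 < L2 ∧
    (∀ x y : X, ‖x‖ ≤ C → ‖y‖ ≤ C → ∀ u : U, ‖u‖ ≤ D →
      ‖g x u - g y u‖ ≤ L1 * ‖x - y‖) ∧
    (∀ x : X, ‖x‖ ≤ C → ∀ u v : U, ‖u‖ ≤ D → ‖v‖ ≤ D →
      ‖g x u - g x v‖ ≤ L2 * ‖u - v‖)

theorem SeparatelyLipschitzOnBounded.exists_monotone_norm_le {X U Y : Type*}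
    [SeminormedAddCommGroup X] [SeminormedAddCommGroup U] [SeminormedAddCommGroup Y]
    {g : X → U → Y} (hg : SeparatelyLipschitzOnBounded g) (hg0 : g 0 0 = 0) :
    ∃ K : ℝ → ℝ, Monotone K ∧ (∀ s, 0 < K s) ∧
      ∀ s (x : X) (u : U), ‖x‖ ≤ s → ‖u‖ ≤ s → ‖g x u‖ ≤ K s * (‖x‖ + ‖u‖) := by
  choose L1 hL1 L2 hL2 hLx hLu using hg
  let M : ℕ → ℝ := fun n => max (L1 (n + 1) n.cast_add_one_pos (n + 1) n.cast_add_one_pos)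
    (L2 (n + 1) n.cast_add_one_pos (n + 1) n.cast_add_one_pos)
  refine ⟨fun s => partialSups M ⌈s⌉₊, fun a b hab => partialSups_monotone M (Nat.ceil_mono hab),
    fun s => (hL1 _ _ _ _).trans_le ((le_max_left _ _).trans (le_partialSups M _)),
    fun s x u hx hu => ?_⟩
  set n := ⌈s⌉₊
  have hs : s ≤ n + 1 := (Nat.le_ceil s).trans (by linarith)
  have h0 : ‖(0 : X)‖ ≤ n + 1 := by rw [norm_zero]; positivity
  have h0' : ‖(0 : U)‖ ≤ n + 1 := by rw [norm_zero]; positivity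
  calc ‖g x u‖ = ‖g x u - g 0 0‖ := by rw [hg0, sub_zero]
    _ ≤ ‖g x u - g 0 u‖ + ‖g 0 u - g 0 0‖ := norm_sub_le_norm_sub_add_norm_sub _ _ _
    _ ≤ _ * ‖x - 0‖ + _ * ‖u - 0‖ := add_le_add (hLx _ _ _ _ x 0 (hx.trans hs) h0 u (hu.trans hs))
        (hLu _ _ _ _ 0 h0 u 0 (hu.trans hs) h0')
    _ ≤ M n * ‖x‖ + M n * ‖u‖ := by
        simp only [sub_zero]
        gcongr
        exacts [le_max_left _ _, le_max_right _ _]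
    _ ≤ partialSups M n * (‖x‖ + ‖u‖) := by
        rw [← mul_add]
        gcongr
        exact le_partialSups M n

theorem ClassK.nonneg {γ : ℝ → ℝ} (hγ : ClassK γ) {r : ℝ} (hr : 0 ≤ r) : 0 ≤ γ r :=
  hγ.2.2 ▸ hγ.2.1.monotoneOn self_mem_Ici hr hr

theorem classK_id : ClassK fun r => r :=
  ⟨continuousOn_id, strictMonoOn_id, rfl⟩

theorem ClassK.add {γ δ : ℝ → ℝ} (hγ : ClassK γ) (hδ : ClassK δ) :
    ClassK fun r => γ r + δ r :=
  ⟨hγ.1.add hδ.1, fun _ ha _ hb hab => add_lt_add (hγ.2.1 ha hb hab) (hδ.2.1 ha hb hab),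
    by simp [hγ.2.2, hδ.2.2]⟩

theorem ClassK.comp_mul_self {β ψ : ℝ → ℝ} (hβ : ClassK β) (hψc : ContinuousOn ψ (Ici 0))
    (hψm : MonotoneOn ψ (Ici 0)) (hψpos : ∀ t, 0 < t → 0 < ψ t) :
    ClassK fun r => ψ (β r) * β r := by
  have hmaps : MapsTo β (Ici 0) (Ici 0) := fun _ hr => hβ.nonneg hr
  refine ⟨(hψc.comp hβ.1 hmaps).mul hβ.1, fun a ha b hb hab => ?_, by simp [hβ.2.2]⟩
  have hβab : β a < β b := hβ.2.1 ha hb hab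
  have hβa : 0 ≤ β a := hβ.nonneg ha
  calc ψ (β a) * β a ≤ ψ (β b) * β a :=
        mul_le_mul_of_nonneg_right (hψm hβa (hmaps hb) hβab.le) hβa
    _ < ψ (β b) * β b := mul_lt_mul_of_pos_left hβab (hψpos _ (hβa.trans_lt hβab))

/-- a jump map `g` with `g(0,0) = 0`, Lipschitz on bounded sets in each
variable, is bounded by a class-𝒦 function of the input norm on the input-dependent ball
`‖x‖ ≤ κ(‖u‖)`. -/
theorem jumpClassKBound {X U : Type*} [NormedAddCommGroup X] [NormedAddCommGroup U]
    (g : X → U → X) (hg0 : g 0 0 = 0)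
    (hg : ∀ C, 0 < C → ∀ D, 0 < D → ∃ L1, 0 < L1 ∧ ∃ L2, 0 < L2 ∧
      (∀ x y : X, ‖x‖ ≤ C → ‖y‖ ≤ C → ∀ u : U, ‖u‖ ≤ D →
        ‖g x u - g y u‖ ≤ L1 * ‖x - y‖) ∧
      (∀ x : X, ‖x‖ ≤ C → ∀ u v : U, ‖u‖ ≤ D → ‖v‖ ≤ D →
        ‖g x u - g x v‖ ≤ L2 * ‖u - v‖))
    (κ : ℝ → ℝ) (hκ : ClassKInf κ) :
    ∃ αt : ℝ → ℝ, ClassK αt ∧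
      ∀ (x : X) (u : U), ‖x‖ ≤ κ ‖u‖ → ‖g x u‖ ≤ αt ‖u‖ := by
  obtain ⟨K, hKm, hKpos, hK⟩ :=
    SeparatelyLipschitzOnBounded.exists_monotone_norm_le (g := g) hg hg0
  obtain ⟨ψ, hψc, hψm, hKψ⟩ := hKm.exists_continuous_monotone_ge
  have hψpos : ∀ t, 0 < ψ t := fun t => (hKpos t).trans_le (hKψ t)
  refine ⟨fun r => ψ (κ r + r) * (κ r + r),
    (hκ.1.add classK_id).comp_mul_self hψc.continuousOn (hψm.monotoneOn _) fun t _ => hψpos t,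
    fun x u hx => ?_⟩
  have hκu : 0 ≤ κ ‖u‖ := hκ.1.nonneg (norm_nonneg u)
  calc ‖g x u‖ ≤ K (κ ‖u‖ + ‖u‖) * (‖x‖ + ‖u‖) := hK _ x u (by linarith [norm_nonneg u]) (by linarith)
    _ ≤ ψ (κ ‖u‖ + ‖u‖) * (κ ‖u‖ + ‖u‖) :=
        mul_le_mul (hKψ _) (by linarith) (by positivity) (hψpos _).le
end
end

section
/- Let φ ∈ 𝒫, t₀ ∈ ℝ, (tᵢ) an impulse time sequence, and let v: [t₀,∞) → [0,∞) be impulsive-regular with D⁺v(t) ≤ −φ(v(t)) at every non-impulse time t and v(tᵢ) ≤ v(tᵢ⁻) at every impulse time tᵢ. If v(t∗) = 0 for some t∗ ≥ t₀, then v(t) = 0 for all t ≥ t∗. -/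
open Filter Topology Set MeasureTheory

noncomputable section

/-! The Lyapunov value `v` is nonincreasing on `[t₀, ∞)`. On each interval between consecutive
impulse times `v` is continuous from the right at the left end, continuous inside, and has
`D⁺v ≤ -φ(v) ≤ 0`, so it is nonincreasing there by the Dini form of the mean value inequality; at the
next impulse time its value is at most its left limit, which is at most every earlier value in the
interval. Gluing the intervals, a nonnegative nonincreasing function stays at `0` once it hits `0`. -/

theorem DiniUpper.eventually_slope_lt {f : ℝ → ℝ} {x r : ℝ}
    (h : DiniUpper f x < r) : ∀ᶠ z in 𝓝[>] x, slope f x z < r := by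
  have hsub : Tendsto (fun z => z - x) (𝓝[>] x) (𝓝[>] 0) := by
    have := ((continuous_sub_right x).continuousWithinAt (s := Ioi x) (x := x)).tendsto_nhdsWithin
      (t := Ioi 0) fun z hz => sub_pos.mpr hz
    rwa [sub_self] at this
  filter_upwards [hsub.eventually (eventually_lt_of_limsup_lt h)] with z hz
  rw [add_sub_cancel] at hz
  rw [slope_def_field]
  exact EReal.coe_lt_coe_iff.mp hz

theorem le_of_continuousOn_of_diniUpper_nonpos {f : ℝ → ℝ} {a b : ℝ} (hab : a ≤ b)
    (hf : ContinuousOn f (Icc a b)) (hD : ∀ x ∈ Ioo a b, DiniUpper f x ≤ 0) : f b ≤ f a := by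
  -- Mathlib's comparison lemma needs the slope bound at the left end too, so start at `a' > a`
  -- and let `a' ↓ a` by right continuity.
  have hinner : ∀ a' ∈ Ioo a b, f b ≤ f a' := fun a' ha' =>
    image_le_of_liminf_slope_right_le_deriv_boundary (B := fun _ => f a') (B' := 0)
      (hf.mono (Icc_subset_Icc_left ha'.1.le)) le_rfl continuousOn_const
      (fun x _ => hasDerivWithinAt_const _ _ _)
      (fun x hx r hr => (DiniUpper.eventually_slope_lt
        ((hD x ⟨ha'.1.trans_le hx.1, hx.2⟩).trans_lt (by exact_mod_cast hr))).frequently)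
      ⟨ha'.2.le, le_rfl⟩
  rcases hab.eq_or_lt with rfl | hlt
  · exact le_rfl
  have hright : Tendsto f (𝓝[>] a) (𝓝 (f a)) :=
    (hf a (left_mem_Icc.mpr hab)).mono_of_mem_nhdsWithin (Icc_mem_nhdsGT hlt)
  exact ge_of_tendsto hright (by filter_upwards [Ioo_mem_nhdsGT hlt] using hinner)

theorem antitoneOn_Ico_of_diniUpper_nonpos {f : ℝ → ℝ} {a b : ℝ} (hf : ContinuousOn f (Ico a b))
    (hD : ∀ x ∈ Ioo a b, DiniUpper f x ≤ 0) : AntitoneOn f (Ico a b) :=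
  fun _ hx _ hy hxy => le_of_continuousOn_of_diniUpper_nonpos hxy
    (hf.mono (Icc_subset_Ico hx.1 hy.2)) fun z hz => hD z (Ioo_subset_Ioo hx.1 hy.2.le hz)

theorem antitoneOn_Icc_of_diniUpper_nonpos {f : ℝ → ℝ} {a b L : ℝ} (hf : ContinuousOn f (Ico a b))
    (hD : ∀ x ∈ Ioo a b, DiniUpper f x ≤ 0) (hL : Tendsto f (𝓝[<] b) (𝓝 L)) (hb : f b ≤ L) :
    AntitoneOn f (Icc a b) := by
  have hIco := antitoneOn_Ico_of_diniUpper_nonpos hf hD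
  intro x hx y hy hxy
  rcases hy.2.lt_or_eq with hyb | rfl
  · exact hIco ⟨hx.1, hxy.trans_lt hyb⟩ ⟨hy.1, hyb⟩ hxy
  rcases hxy.lt_or_eq with hxy | rfl
  · refine hb.trans (le_of_tendsto hL ?_)
    filter_upwards [Ioo_mem_nhdsLT hxy] with s hs
    exact hIco ⟨hx.1, hxy⟩ ⟨hx.1.trans hs.1.le, hs.2⟩ hs.1.le
  · exact le_rfl

theorem ClassP.nonneg {φ : ℝ → ℝ} (hφ : ClassP φ) {r : ℝ} (hr : 0 ≤ r) : 0 ≤ φ r := by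
  rcases hr.eq_or_lt with rfl | hr
  · exact hφ.2.1.ge
  · exact (hφ.2.2 r hr).le

theorem notMem_impulseSet_of_mem_Ioo {τ : ℕ → ℝ} (hτ : StrictMono τ) {n : ℕ} {x : ℝ}
    (hx : x ∈ Ioo (τ n) (τ (n + 1))) : x ∉ impulseSet τ := by
  rintro ⟨j, -, rfl⟩
  have := hτ.lt_iff_lt.mp hx.1
  have := hτ.lt_iff_lt.mp hx.2
  omega

theorem ImpulsiveRegular.continuousOn_Ico_s17 {t₀ a b : ℝ} {τ : ℕ → ℝ} {v : ℝ → ℝ}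
    (hreg : ImpulsiveRegular t₀ τ v) (ha : t₀ ≤ a) (hS : ∀ x ∈ Ioo a b, x ∉ impulseSet τ) :
    ContinuousOn v (Ico a b) := by
  intro x hx
  rcases hx.1.eq_or_lt with rfl | hax
  · exact (hreg.1 _ ha).mono Ico_subset_Ici_self
  · exact (hreg.2.1 x (ha.trans hax.le) (hS x ⟨hax, hx.2⟩)).mono fun y hy => ha.trans hy.1

section Impulsive

variable {φ : ℝ → ℝ} {t₀ : ℝ} {τ : ℕ → ℝ} {v : ℝ → ℝ}

theorem antitoneOn_Icc_impulse_succ (hφ : ClassP φ) (hτ : StrictMono τ) {n : ℕ} (hn : t₀ ≤ τ n)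
    (hvnn : ∀ t, t₀ ≤ t → 0 ≤ v t) (hreg : ImpulsiveRegular t₀ τ v)
    (hflow : ∀ t, t₀ ≤ t → t ∉ impulseSet τ → DiniUpper v t ≤ (((-φ (v t)) : ℝ) : EReal))
    (hjump : ∀ i : ℕ, 1 ≤ i → v (τ i) ≤ Function.leftLim v (τ i)) :
    AntitoneOn v (Icc (τ n) (τ (n + 1))) := by
  have hS : ∀ x ∈ Ioo (τ n) (τ (n + 1)), x ∉ impulseSet τ :=
    fun x hx => notMem_impulseSet_of_mem_Ioo hτ hx
  obtain ⟨L, hL⟩ := hreg.2.2 (n + 1) n.succ_pos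
  refine antitoneOn_Icc_of_diniUpper_nonpos (hreg.continuousOn_Ico_s17 hn hS) (fun x hx => ?_) hL
    ((hjump (n + 1) n.succ_pos).trans_eq (leftLim_eq_of_tendsto hL))
  have hx₀ : t₀ ≤ x := hn.trans hx.1.le
  refine (hflow x hx₀ (hS x hx)).trans ?_
  exact_mod_cast neg_nonpos.mpr (hφ.nonneg (hvnn x hx₀))

theorem antitoneOn_Ici_of_impulsive (hφ : ClassP φ) (hτ : IsImpulseSeq t₀ τ)
    (hvnn : ∀ t, t₀ ≤ t → 0 ≤ v t) (hreg : ImpulsiveRegular t₀ τ v)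
    (hflow : ∀ t, t₀ ≤ t → t ∉ impulseSet τ → DiniUpper v t ≤ (((-φ (v t)) : ℝ) : EReal))
    (hjump : ∀ i : ℕ, 1 ≤ i → v (τ i) ≤ Function.leftLim v (τ i)) :
    AntitoneOn v (Ici t₀) := by
  obtain ⟨hτ0, hmono, hτtop⟩ := hτ
  have hIcc : ∀ n, AntitoneOn v (Icc t₀ (τ n)) := by
    intro n
    induction n with
    | zero => simp [hτ0]
    | succ n ih =>
      have hn : t₀ ≤ τ n := hτ0 ▸ hmono.monotone n.zero_le
      rw [← Icc_union_Icc_eq_Icc hn (hmono n.lt_succ_self).le]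
      exact ih.union_right (antitoneOn_Icc_impulse_succ hφ hmono hn hvnn hreg hflow hjump)
        (isGreatest_Icc hn) (isLeast_Icc (hmono n.lt_succ_self).le)
  intro a ha b hb hab
  obtain ⟨n, hbn⟩ := (hτtop.eventually_ge_atTop b).exists
  exact hIcc n ⟨ha, hab.trans hbn⟩ ⟨hb, hbn⟩ hab

end Impulsive

/-- once the Lyapunov value of an impulsive trajectory vanishes, it vanishes
for all later times. -/
theorem vanishForever
    (φ : ℝ → ℝ) (hφ : ClassP φ)
    (t₀ : ℝ) (τ : ℕ → ℝ) (hτ : IsImpulseSeq t₀ τ)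
    (v : ℝ → ℝ) (hvnn : ∀ t, t₀ ≤ t → 0 ≤ v t)
    (hreg : ImpulsiveRegular t₀ τ v)
    (hflow : ∀ t, t₀ ≤ t → t ∉ impulseSet τ →
      DiniUpper v t ≤ (((-φ (v t)) : ℝ) : EReal))
    (hjump : ∀ i : ℕ, 1 ≤ i → v (τ i) ≤ Function.leftLim v (τ i))
    (tstar : ℝ) (hts : t₀ ≤ tstar) (hv0 : v tstar = 0) :
    ∀ t, tstar ≤ t → v t = 0 := by
  intro t ht
  have hle : v t ≤ v tstar :=
    antitoneOn_Ici_of_impulsive hφ hτ hvnn hreg hflow hjump hts (hts.trans ht) ht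
  exact le_antisymm (hv0 ▸ hle) (hvnn t (hts.trans ht))
end
end

section
/- Let φ ∈ 𝒫, let a < b be reals, and let v: [a,b] → (0,∞) be continuous with D⁺v(t) ≤ −φ(v(t)) for all t ∈ [a,b). Then ∫_{v(a)}^{v(b)} ds/φ(s) ≤ −(b − a); equivalently, F(v(b)) ≤ F(v(a)) − (b − a), where F(q) := ∫₁^q ds/φ(s) for q > 0. -/
open Filter Topology Set MeasureTheory

noncomputable section

/-! With `F q = ∫₁^q ds/φ(s)`, the chain rule for the upper right Dini derivative (valid because
`F' = 1/φ > 0`) gives `D⁺(F ∘ v) ≤ F'(v) · (−φ(v)) = −1` on `[a, b)`, and a continuous function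
whose upper right Dini derivative is at most `−1` decreases at least at unit rate. -/

theorem eventually_slope_lt_of_diniUpper_le {v : ℝ → ℝ} {t L r : ℝ}
    (h : DiniUpper v t ≤ L) (hr : L < r) : ∀ᶠ z in 𝓝[>] t, slope v t z < r := by
  have hlim : ∀ᶠ s in 𝓝[>] 0, (v (t + s) - v t) / s < r := by
    have := eventually_lt_of_limsup_lt (lt_of_le_of_lt h (EReal.coe_lt_coe_iff.mpr hr))
    exact this.mono fun s hs => EReal.coe_lt_coe_iff.mp hs
  have hshift : Tendsto (fun z => z - t) (𝓝[>] t) (𝓝[>] 0) := by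
    refine tendsto_nhdsWithin_of_tendsto_nhds_of_eventually_within _ ?_ ?_
    · exact ((continuous_sub_right t).tendsto' t 0 (sub_self t)).mono_left nhdsWithin_le_nhds
    · filter_upwards [self_mem_nhdsWithin] with z (hz : t < z) using sub_pos.mpr hz
  filter_upwards [hshift.eventually hlim] with z hz
  simpa [slope_def_field] using hz

theorem eventually_slope_comp_lt {f g : ℝ → ℝ} {t g' L : ℝ} (hg : HasDerivAt g g' (f t))
    (hg' : 0 < g') (hf : ContinuousWithinAt f (Ioi t) t)
    (hL : ∀ r > L, ∀ᶠ z in 𝓝[>] t, slope f t z < r) :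
    ∀ r > g' * L, ∀ᶠ z in 𝓝[>] t, slope (g ∘ f) t z < r := by
  intro r hr
  -- Near `f t`, `g (f z) - g (f t) ≤ g' Δ + ε |Δ|` with `Δ = f z - f t`, so
  -- `slope (g ∘ f) ≤ g' x + ε |x|` at `x = slope f`; this majorant is monotone in `x` once `ε ≤ g'`.
  have hmaj : Tendsto (fun ε => g' * (L + ε) + ε * |L + ε|) (𝓝[>] 0) (𝓝 (g' * L)) := by
    have : Continuous (fun ε => g' * (L + ε) + ε * |L + ε|) := by fun_prop
    simpa using this.continuousWithinAt.tendsto (x := 0) (s := Ioi 0)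
  obtain ⟨ε, hεr, hε0, hεg'⟩ := ((hmaj.eventually (gt_mem_nhds hr)).and
    (Ioo_mem_nhdsGT hg')).exists
  filter_upwards [hL _ (lt_add_of_pos_right L hε0), hf.tendsto.eventually (hg.isLittleO.def hε0),
    self_mem_nhdsWithin] with z hzL hzo hz
  have hd : 0 < z - t := sub_pos.mpr hz
  have hchain : slope (g ∘ f) t z ≤ g' * slope f t z + ε * |slope f t z| := by
    have hΔ := (abs_le.mp
      (show |g (f z) - g (f t) - (f z - f t) * g'| ≤ ε * |f z - f t| from hzo)).2
    rw [slope_def_field, slope_def_field, Function.comp_apply, Function.comp_apply, abs_div,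
      abs_of_pos hd]
    field_simp
    linarith
  have hmono : g' * slope f t z + ε * |slope f t z| ≤ g' * (L + ε) + ε * |L + ε| := by
    have habs : |slope f t z| - |L + ε| ≤ L + ε - slope f t z := by
      rw [← abs_of_pos (sub_pos.mpr hzL), abs_sub_comm]
      exact abs_sub_abs_le_abs_sub _ _
    nlinarith [mul_le_mul_of_nonneg_left habs hε0.le]
  linarith

theorem hasDerivAt_integral_of_continuousOn {E : Type*} [NormedAddCommGroup E] [NormedSpace ℝ E]
    [CompleteSpace E] {f : ℝ → E} {s : Set ℝ} (hs : IsOpen s) (hs' : s.OrdConnected)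
    (hf : ContinuousOn f s) {c x : ℝ} (hc : c ∈ s) (hx : x ∈ s) :
    HasDerivAt (fun y => ∫ u in c..y, f u) (f x) x :=
  intervalIntegral.integral_hasDerivAt_right
    ((hf.mono (hs'.uIcc_subset hc hx)).intervalIntegrable)
    (hf.stronglyMeasurableAtFilter hs x hx) (hf.continuousAt (hs.mem_nhds hx))

theorem ClassP.continuousOn_inv {φ : ℝ → ℝ} (hφ : ClassP φ) :
    ContinuousOn (fun s => (φ s)⁻¹) (Ioi 0) :=
  (hφ.1.mono Ioi_subset_Ici_self).inv₀ fun _ hs => (hφ.2.2 _ hs).ne'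

/-- single-interval comparison estimate: if `v > 0` is continuous on `[a,b]`
with `D⁺v ≤ −φ(v)` on `[a,b)`, then `∫_{v(a)}^{v(b)} ds/φ(s) ≤ −(b − a)`; equivalently
`F(v(b)) ≤ F(v(a)) − (b − a)` for `F(q) = ∫₁^q ds/φ(s)`. -/
theorem intervalComparison
    (φ : ℝ → ℝ) (hφ : ClassP φ)
    (a b : ℝ) (hab : a < b)
    (v : ℝ → ℝ)
    (hvc : ContinuousOn v (Set.Icc a b))
    (hvpos : ∀ t ∈ Set.Icc a b, 0 < v t)
    (hdini : ∀ t ∈ Set.Ico a b, DiniUpper v t ≤ (((-φ (v t)) : ℝ) : EReal)) :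
    (∫ s in (v a)..(v b), (φ s)⁻¹) ≤ -(b - a) ∧
    (∫ s in (1:ℝ)..(v b), (φ s)⁻¹) ≤ (∫ s in (1:ℝ)..(v a), (φ s)⁻¹) - (b - a) := by
  set F : ℝ → ℝ := fun q => ∫ s in (1:ℝ)..q, (φ s)⁻¹
  have hF : ∀ q, 0 < q → HasDerivAt F (φ q)⁻¹ q := fun q hq =>
    hasDerivAt_integral_of_continuousOn isOpen_Ioi ordConnected_Ioi hφ.continuousOn_inv
      (mem_Ioi.mpr one_pos) hq
  have hslope : ∀ t ∈ Ico a b, ∀ r > -1, ∀ᶠ z in 𝓝[>] t, slope (F ∘ v) t z < r := by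
    intro t ht
    have hvt := hvpos t (Ico_subset_Icc_self ht)
    have hφt := hφ.2.2 _ hvt
    have := eventually_slope_comp_lt (hF _ hvt) (inv_pos.mpr hφt)
      ((hvc t (Ico_subset_Icc_self ht)).mono_of_mem_nhdsWithin (Icc_mem_nhdsGT_of_mem ht))
      fun r hr => eventually_slope_lt_of_diniUpper_le (hdini t ht) hr
    rwa [mul_neg, inv_mul_cancel₀ hφt.ne'] at this
  have hFv : ContinuousOn (F ∘ v) (Icc a b) := fun t ht =>
    (hF _ (hvpos t ht)).continuousAt.comp_continuousWithinAt (hvc t ht)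
  have hFab : F (v b) ≤ F (v a) - (b - a) :=
    image_le_of_liminf_slope_right_le_deriv_boundary hFv (B := fun x => F (v a) - (x - a))
      (B' := fun _ => -1) (by simp) (by fun_prop)
      (fun x _ => by
        simpa using ((hasDerivAt_id x).sub_const a).const_sub (F (v a)) |>.hasDerivWithinAt)
      (fun x hx r hr => (hslope x hx r hr).frequently) (right_mem_Icc.mpr hab.le)
  have hint : ∀ q, 0 < q → IntervalIntegrable (fun s => (φ s)⁻¹) volume 1 q := fun q hq =>
    (hφ.continuousOn_inv.mono
      (ordConnected_Ioi.uIcc_subset (mem_Ioi.mpr one_pos) hq)).intervalIntegrable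
  have hva := hvpos a (left_mem_Icc.mpr hab.le)
  have hvb := hvpos b (right_mem_Icc.mpr hab.le)
  refine ⟨?_, hFab⟩
  rw [← intervalIntegral.integral_interval_sub_left (hint _ hvb) (hint _ hva)]
  linarith
end
end
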